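/- Let S(t) be a C₀-semigroup on a separable Hilbert space H, Q^{1/2}: U → H Hilbert–Schmidt, and fix t > 0 and h ∈ H. Define v_h(r) = (Q^{1/2})* S(t−r)* γ_t† h for r ∈ [0,t], where γ_t = ∫₀ᵗ S(s)Q^{1/2}(Q^{1/2})* S(s)* ds and h lies in Ran(γ_t). Then ∫₀ᵗ S(t−r) Q^{1/2} v_h(r) dr = γ_t γ_t† h, which equals the orthogonal projection of h onto the closure of Ran(γ_t); in particular it equals h when h ∈ Ran(γ_t). -/

import Mathlib

open MeasureTheory ContinuousLinearMap

/-! Substituting `s = t - r` turns the integral into `(∫₀ᵗ S s Q Q* (S s)* ds) (γd h) = γt (γd h)`.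
Since `γd` inverts `γt` on `(ker γt)ᗮ`, and `γt` only sees the `(ker γt)ᗮ`-component of its
argument, `γt ∘ γd` is the identity on `range γt`, and so is the orthogonal projection onto
the closure of that range. -/

theorem ContinuousLinearMap.intervalIntegral_comp_sub_left_apply
    {E F : Type*} [NormedAddCommGroup E] [NormedSpace ℝ E]
    [NormedAddCommGroup F] [NormedSpace ℝ F] [CompleteSpace F]
    {φ : ℝ → E →L[ℝ] F} {t : ℝ} (hφ : IntervalIntegrable φ volume 0 t) (x : E) :
    ∫ r in (0:ℝ)..t, φ (t - r) x = (∫ s in (0:ℝ)..t, φ s) x := by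
  rw [intervalIntegral.integral_comp_sub_left (fun s => φ s x) t, sub_self, sub_zero,
    ContinuousLinearMap.intervalIntegral_apply hφ]

theorem ContinuousLinearMap.apply_apply_eq_self_of_leftInverseOn_orthogonal_ker
    {𝕜 E F : Type*} [RCLike 𝕜] [NormedAddCommGroup E] [InnerProductSpace 𝕜 E] [CompleteSpace E]
    [AddCommGroup F] [Module 𝕜 F] [TopologicalSpace F] [T1Space F]
    (A : E →L[𝕜] F) (B : F →ₗ[𝕜] E)
    (hB : ∀ x ∈ (LinearMap.ker (A : E →ₗ[𝕜] F))ᗮ, B (A x) = x)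
    {y : F} (hy : y ∈ LinearMap.range (A : E →ₗ[𝕜] F)) :
    A (B y) = y := by
  obtain ⟨x, rfl⟩ := hy
  have : CompleteSpace (LinearMap.ker (A : E →ₗ[𝕜] F)) := A.isClosed_ker.completeSpace_coe
  obtain ⟨k, hk, z, hz, rfl⟩ := (LinearMap.ker (A : E →ₗ[𝕜] F)).exists_add_mem_mem_orthogonal x
  have hAk : A k = 0 := hk
  have hAkz : A (k + z) = A z := by rw [map_add, hAk, zero_add]
  simp only [ContinuousLinearMap.coe_coe, hAkz, hB z hz]

theorem covering_property_general
    {H U : Type*}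
    [NormedAddCommGroup H] [InnerProductSpace ℝ H] [CompleteSpace H]
    [NormedAddCommGroup U] [InnerProductSpace ℝ U] [CompleteSpace U]
    (S : ℝ → H →L[ℝ] H) (Q : U →L[ℝ] H)
    (t : ℝ)
    (hintOp : IntervalIntegrable
      (fun s : ℝ => (S s).comp (Q.comp ((adjoint Q).comp (adjoint (S s)))))
      volume 0 t)
    (γt : H →L[ℝ] H)
    (hγ : γt = ∫ s in (0:ℝ)..t,
      (S s).comp (Q.comp ((adjoint Q).comp (adjoint (S s)))))
    (γd : H →ₗ[ℝ] H)
    (hγd : ∀ x ∈ (LinearMap.ker (γt : H →ₗ[ℝ] H))ᗮ, γd (γt x) = x)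
    (h : H) (hh : h ∈ LinearMap.range (γt : H →ₗ[ℝ] H))
    (vh : ℝ → U)
    (hvh : ∀ r : ℝ, vh r = adjoint Q (adjoint (S (t - r)) (γd h))) :
    haveI : CompleteSpace (LinearMap.range (γt : H →ₗ[ℝ] H)).topologicalClosure :=
      (LinearMap.range (γt : H →ₗ[ℝ] H)).isClosed_topologicalClosure.completeSpace_coe
    (∫ r in (0:ℝ)..t, S (t - r) (Q (vh r))) = γt (γd h) ∧
    γt (γd h) = (Submodule.orthogonalProjectionOnto (LinearMap.range (γt : H →ₗ[ℝ] H)).topologicalClosure h : H) ∧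
    γt (γd h) = h := by
  have hfix : γt (γd h) = h := γt.apply_apply_eq_self_of_leftInverseOn_orthogonal_ker γd hγd hh
  refine ⟨?_, ?_, hfix⟩
  · simp only [hvh]
    rw [hγ]
    exact intervalIntegral_comp_sub_left_apply hintOp (γd h)
  · rw [hfix]
    exact (Submodule.starProjection_eq_self_iff.mpr
      ((LinearMap.range (γt : H →ₗ[ℝ] H)).le_topologicalClosure hh)).symm

/-- Covering property: with `v_h(r) = (Q^{1/2})* S(t-r)* γ_t† h`,
`∫₀ᵗ S(t−r) Q^{1/2} v_h(r) dr = γ_t γ_t† h`, the orthogonal projection of `h` onto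
the closure of `Ran γ_t`; in particular it equals `h` for `h ∈ Ran γ_t`. -/
theorem covering_property
    {H U : Type*}
    [NormedAddCommGroup H] [InnerProductSpace ℝ H] [CompleteSpace H]
    [TopologicalSpace.SeparableSpace H]
    [NormedAddCommGroup U] [InnerProductSpace ℝ U] [CompleteSpace U]
    [TopologicalSpace.SeparableSpace U]
    (S : ℝ → H →L[ℝ] H) (Q : U →L[ℝ] H)
    (hS0 : S 0 = 1)
    (hSsemi : ∀ t s : ℝ, 0 ≤ t → 0 ≤ s → S (t + s) = (S t).comp (S s))
    (hScont : ∀ x : H, Continuous fun r : ℝ => S r x)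
    {κ : Type*} (f : HilbertBasis κ ℝ U)
    (hQHS : Summable fun k : κ => ‖Q (f k)‖ ^ 2)
    (t : ℝ) (ht : 0 < t)
    (hintOp : IntervalIntegrable
      (fun s : ℝ => (S s).comp (Q.comp ((adjoint Q).comp (adjoint (S s)))))
      volume 0 t)
    (γt : H →L[ℝ] H)
    (hγ : γt = ∫ s in (0:ℝ)..t,
      (S s).comp (Q.comp ((adjoint Q).comp (adjoint (S s)))))
    (γd : H →ₗ[ℝ] H)
    (hγd : ∀ x ∈ (LinearMap.ker (γt : H →ₗ[ℝ] H))ᗮ, γd (γt x) = x)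
    (h : H) (hh : h ∈ LinearMap.range (γt : H →ₗ[ℝ] H))
    (vh : ℝ → U)
    (hvh : ∀ r : ℝ, vh r = adjoint Q (adjoint (S (t - r)) (γd h)))
    (hintVec : IntervalIntegrable (fun r : ℝ => S (t - r) (Q (vh r))) volume 0 t) :
    haveI : CompleteSpace (LinearMap.range (γt : H →ₗ[ℝ] H)).topologicalClosure :=
      (LinearMap.range (γt : H →ₗ[ℝ] H)).isClosed_topologicalClosure.completeSpace_coe
    (∫ r in (0:ℝ)..t, S (t - r) (Q (vh r))) = γt (γd h) ∧
    γt (γd h) = (Submodule.orthogonalProjectionOnto (LinearMap.range (γt : H →ₗ[ℝ] H)).topologicalClosure h : H) ∧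
    γt (γd h) = h :=
  covering_property_general S Q t hintOp γt hγ γd hγd h hh vh hvh
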